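/- Let n ≥ 2, let M be an n-connected binary matroid with |E(M)| ≥ 2n-2, and let T ⊆ E(M) with |T| = n-1. Then M'_T is n-connected if and only if every cocircuit Q of M intersecting T satisfies |Q| ≥ 2|Q ∩ T|. -/

import Mathlib

open Set

variable {α : Type*}

/-- The rank of a set `X` in a matroid `M`: the maximum size of an independent subset of `X`. -/
noncomputable def mrank (M : Matroid α) (X : Set α) : ℕ :=
  sSup {n | ∃ I, M.Indep I ∧ I ⊆ X ∧ I.ncard = n}

/-- `(A, B)` is a `k`-separation of `M`: a partition of the ground set with both sides of
size at least `k` and `r(A) + r(B) - r(M) ≤ k - 1` (written additively). -/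
def IsKSeparation (M : Matroid α) (k : ℕ) (A B : Set α) : Prop :=
  A ∪ B = M.E ∧ Disjoint A B ∧ k ≤ A.ncard ∧ k ≤ B.ncard ∧
    mrank M A + mrank M B + 1 ≤ mrank M M.E + k

/-- `M` is `n`-connected if it has no `k`-separation for any `k < n`. -/
def NConnected (M : Matroid α) (n : ℕ) : Prop :=
  ∀ k A B, 1 ≤ k → k < n → ¬ IsKSeparation M k A B

/-- A circuit is a minimal dependent set. -/
def MCircuit (M : Matroid α) (C : Set α) : Prop := Minimal M.Dep C

/-- A cocircuit is a circuit of the dual matroid. -/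
def MCocircuit (M : Matroid α) (C : Set α) : Prop := MCircuit M✶ C

/-- A loop is a dependent singleton. -/
def MLoop (M : Matroid α) (e : α) : Prop := M.Dep {e}

/-- A coloop is a loop of the dual, i.e. an element lying in every base. -/
def MColoop (M : Matroid α) (e : α) : Prop := M✶.Dep {e}

/-- `M` is the vector matroid of the family of vectors `φ` over `GF(2)`:
a set is independent iff it lies in the ground set and the corresponding
vectors are linearly independent. -/
def IsRep {W : Type*} [AddCommGroup W] [Module (ZMod 2) W] (M : Matroid α) (φ : α → W) : Prop :=
  ∀ I : Set α, M.Indep I ↔ I ⊆ M.E ∧ LinearIndependent (ZMod 2) (I.restrict φ)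

open scoped Classical in
/-- The columns of the element splitting matrix `A'_T`: each original column gets an extra
coordinate (the new row), equal to `1` exactly on the columns labelled by `T`, and a new
column `a` which is `1` in the new row and `0` elsewhere. -/
noncomputable def splitRep {W : Type*} [AddCommGroup W] [Module (ZMod 2) W]
    (φ : α → W) (T : Set α) (a : α) : α → W × ZMod 2 :=
  fun x => if x = a then (0, 1) else (φ x, if x ∈ T then 1 else 0)

/-- `N` is the element splitting matroid `M'_T` of the binary matroid `M` (represented by `φ`)
with respect to `T`, with new element `a`. -/
def IsEleSplit {W : Type*} [AddCommGroup W] [Module (ZMod 2) W]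
    (M : Matroid α) (φ : α → W) (T : Set α) (a : α) (N : Matroid α) : Prop :=
  a ∉ M.E ∧ N.E = insert a M.E ∧ IsRep N (splitRep φ T a)

/-- `M` is the contraction `N / a` of the single element `a` from `N`. -/
def ContractElemEq (N : Matroid α) (a : α) (M : Matroid α) : Prop :=
  M.E = N.E \ {a} ∧ ∀ I : Set α,
    M.Indep I ↔ a ∉ I ∧
      ((N.Indep {a} ∧ N.Indep (insert a I)) ∨ (¬ N.Indep {a} ∧ N.Indep I))

/-!
Over `GF(2)` the rank in `M'_T` of a set `X ⊆ E(M)` is `r_M(X)` or `r_M(X) + 1`, and adding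
`a` always makes it `r_M(X) + 1`. The first case happens exactly when the restriction of `T`
to `X` is cut out by a linear functional, i.e. when `T ∩ X = D ∩ X` for a cocycle `D` of `M`
(a disjoint union of cocircuits). Hence the small separations of `M'_T` that do not come
from `M` are of the form `(E \ B, B ∪ a)` with `D ∆ T ⊆ B`, where
`|D ∆ T| = |D| + |T| - 2|D ∩ T|`. A cocircuit `Q` with `|Q| < 2|Q ∩ T|` gives such a
separation with `B = Q ∆ T`, `|B| < |T| = n - 1`. Conversely, the cocircuit condition adds up
over the cocircuits of a cocycle `D`, so `|B| ≥ |D ∆ T| ≥ |T| = n - 1`.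
-/

open Module Submodule
open scoped symmDiff

theorem Set.ncard_symmDiff_add_two_mul_ncard_inter {s t : Set α} (hs : s.Finite) (ht : t.Finite) :
    (s ∆ t).ncard + 2 * (s ∩ t).ncard = s.ncard + t.ncard := by
  have hsub : s ∩ t ⊆ s ∪ t := inter_subset_left.trans subset_union_left
  have := ncard_le_ncard hsub (hs.union ht)
  rw [symmDiff_eq_sup_sdiff_inf]
  change ((s ∪ t) \ (s ∩ t)).ncard + _ = _
  rw [ncard_sdiff hsub (hs.inter_of_left t), ← ncard_union_add_ncard_inter s t hs ht]
  omega

theorem mrank_le_ncard (M : Matroid α) {X : Set α} (hX : X.Finite) : mrank M X ≤ X.ncard :=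
  csSup_le ⟨0, ∅, M.empty_indep, empty_subset X, ncard_empty α⟩
    fun _ ⟨_, _, hIX, h⟩ => h ▸ ncard_le_ncard hIX hX

theorem mrank_mono (M : Matroid α) {X Y : Set α} (hXY : X ⊆ Y) (hY : Y.Finite) :
    mrank M X ≤ mrank M Y :=
  csSup_le ⟨0, ∅, M.empty_indep, empty_subset X, ncard_empty α⟩ fun _ ⟨I, hI, hIX, h⟩ =>
    le_csSup ⟨Y.ncard, fun _ ⟨_, _, hJY, h⟩ => h ▸ ncard_le_ncard hJY hY⟩ ⟨I, hI, hIX.trans hXY, h⟩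

theorem IsKSeparation.symm {M : Matroid α} {k : ℕ} {A B : Set α} (h : IsKSeparation M k A B) :
    IsKSeparation M k B A := by
  obtain ⟨hAB, hdisj, hA, hB, hr⟩ := h
  exact ⟨union_comm A B ▸ hAB, hdisj.symm, hB, hA, by omega⟩

theorem LinearIndepOn.ncard_eq_finrank_span {K V ι : Type*} [DivisionRing K] [AddCommGroup V]
    [Module K V] {v : ι → V} {s : Set ι} (hv : LinearIndepOn K v s) (hs : s.Finite) :
    s.ncard = finrank K (span K (v '' s)) := by
  have := hs.fintype
  rw [image_eq_range, finrank_span_eq_card hv, ncard_eq_toFinset_card', toFinset_card]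

section LinearAlgebra

variable {K W : Type*} [Field K] [AddCommGroup W] [Module K W]

theorem finrank_span_eq_of_subset_graph {S : Set (W × K)} {g : W →ₗ[K] K} (hS : S ⊆ g.graph) :
    finrank K (span K S) = finrank K (span K (Prod.fst '' S)) := by
  have hinj : Function.Injective (LinearMap.id.prod g) := fun _ _ h => congrArg Prod.fst h
  have hmap : span K S = (span K (Prod.fst '' S)).map (LinearMap.id.prod g) := by
    rw [map_span, image_image]
    congr 1
    refine ((image_congr fun s hs => ?_).trans (image_id S)).symm
    exact Prod.ext rfl (hS hs).symm
  rw [hmap]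
  exact (equivMapOfInjective _ hinj _).finrank_eq.symm

theorem exists_subset_graph_of_notMem_span {S : Set (W × K)} (h : ((0 : W), (1 : K)) ∉ span K S) :
    ∃ g : W →ₗ[K] K, S ⊆ g.graph := by
  obtain ⟨f, hf, hSf⟩ := exists_le_ker_of_notMem h
  refine ⟨-(f (0, 1))⁻¹ • f.comp (LinearMap.inl K W K), fun s hs => ?_⟩
  have hs0 : f s = 0 := hSf (subset_span hs)
  have hdecomp : s = LinearMap.inl K W K s.1 + s.2 • ((0 : W), (1 : K)) := by ext <;> simp
  rw [hdecomp, map_add, map_smul, smul_eq_mul] at hs0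
  rw [SetLike.mem_coe, LinearMap.mem_graph_iff, LinearMap.smul_apply, LinearMap.comp_apply,
    smul_eq_mul]
  field_simp
  linear_combination hs0

theorem finrank_span_insert_inr_one {S : Set (W × K)} (hS : S.Finite) :
    finrank K (span K (insert ((0 : W), (1 : K)) S)) = finrank K (span K (Prod.fst '' S)) + 1 := by
  set e : W × K := (0, 1)
  set P := span K (Prod.fst '' S)
  have : FiniteDimensional K P := FiniteDimensional.span_of_finite K (hS.image _)
  have hinj : Function.Injective (LinearMap.inl K W K) := LinearMap.inl_injective
  have hspan : span K (insert e S) = P.map (LinearMap.inl K W K) ⊔ K ∙ e := by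
    rw [span_insert, sup_comm, map_span]
    apply le_antisymm
    · refine sup_le (span_le.2 fun s hs => ?_) le_sup_right
      have : s = (s.1, 0) + s.2 • e := by ext <;> simp [e]
      rw [this]
      exact add_mem (mem_sup_left (subset_span ⟨s.1, ⟨s, hs, rfl⟩, rfl⟩))
        (mem_sup_right (smul_mem _ _ (mem_span_singleton_self e)))
    · refine sup_le (span_le.2 ?_) le_sup_right
      rintro _ ⟨_, ⟨s, hs, rfl⟩, rfl⟩
      have : (s.1, (0 : K)) = s - s.2 • e := by ext <;> simp [e]
      rw [LinearMap.inl_apply, this]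
      exact sub_mem (mem_sup_left (subset_span hs))
        (mem_sup_right (smul_mem _ _ (mem_span_singleton_self e)))
  have hdisj : P.map (LinearMap.inl K W K) ⊓ K ∙ e = ⊥ := by
    refine eq_bot_iff.2 fun x ⟨hx, hxe⟩ => ?_
    obtain ⟨w, -, rfl⟩ := hx
    obtain ⟨c, hc⟩ := mem_span_singleton.1 hxe
    have : w = 0 := by simpa [e] using (congrArg Prod.fst hc).symm
    simp [this]
  have := finrank_sup_add_finrank_inf_eq (P.map (LinearMap.inl K W K)) (K ∙ e)
  rw [← hspan, hdisj, finrank_bot, add_zero, (equivMapOfInjective _ hinj P).finrank_eq.symm,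
    finrank_span_singleton (by simp [e])] at this
  exact this

end LinearAlgebra

namespace IsRep

variable {W : Type*} [AddCommGroup W] [Module (ZMod 2) W] {M : Matroid α} {φ : α → W}
  {I X Y D Q T : Set α} {x : α} {g : W →ₗ[ZMod 2] ZMod 2}

theorem linearIndepOn (hM : IsRep M φ) (hI : M.Indep I) : LinearIndepOn (ZMod 2) φ I :=
  ((hM I).1 hI).2

theorem mem_closure_iff_of_indep (hM : IsRep M φ) (hI : M.Indep I) (hx : x ∈ M.E) :
    x ∈ M.closure I ↔ φ x ∈ span (ZMod 2) (φ '' I) := by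
  have hIE := hI.subset_ground
  rw [← not_iff_not, hI.notMem_closure_iff hx, (hM.linearIndepOn hI).notMem_span_iff, hM,
    insert_subset_iff]
  simp only [hx, hIE, true_and]
  rfl

theorem span_image_eq_of_isBasis (hM : IsRep M φ) (hI : M.IsBasis I X) :
    span (ZMod 2) (φ '' I) = span (ZMod 2) (φ '' X) := by
  refine le_antisymm (span_mono (image_mono hI.subset)) (span_le.2 ?_)
  rintro _ ⟨x, hx, rfl⟩
  exact (hM.mem_closure_iff_of_indep hI.indep (hI.subset_ground hx)).1 (hI.subset_closure hx)

theorem mem_closure_iff (hM : IsRep M φ) (hX : X ⊆ M.E) (hx : x ∈ M.E) :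
    x ∈ M.closure X ↔ φ x ∈ span (ZMod 2) (φ '' X) := by
  obtain ⟨I, hI⟩ := M.exists_isBasis X
  rw [← hI.closure_eq_closure, ← hM.span_image_eq_of_isBasis hI,
    hM.mem_closure_iff_of_indep hI.indep hx]

theorem coindep_iff (hM : IsRep M φ) (hX : X ⊆ M.E) :
    M.Coindep X ↔ ∀ x ∈ M.E, φ x ∈ span (ZMod 2) (φ '' (M.E \ X)) := by
  rw [Matroid.coindep_iff_compl_spanning, Matroid.spanning_iff_ground_subset_closure]
  exact forall₂_congr fun x hx => hM.mem_closure_iff sdiff_subset hx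

theorem mrank_eq_finrank_span (hM : IsRep M φ) (hX : X ⊆ M.E) (hXfin : X.Finite) :
    mrank M X = finrank (ZMod 2) (span (ZMod 2) (φ '' X)) := by
  have hcard : ∀ J ⊆ X, M.Indep J → J.ncard = finrank (ZMod 2) (span (ZMod 2) (φ '' J)) :=
    fun J hJX hJ => (hM.linearIndepOn hJ).ncard_eq_finrank_span (hXfin.subset hJX)
  have hbound : ∀ m ∈ {n | ∃ I, M.Indep I ∧ I ⊆ X ∧ I.ncard = n},
      m ≤ finrank (ZMod 2) (span (ZMod 2) (φ '' X)) := by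
    rintro _ ⟨J, hJ, hJX, rfl⟩
    have : FiniteDimensional (ZMod 2) (span (ZMod 2) (φ '' X)) :=
      FiniteDimensional.span_of_finite _ (hXfin.image φ)
    rw [hcard J hJX hJ]
    exact finrank_mono (span_mono (image_mono hJX))
  obtain ⟨I, hI⟩ := M.exists_isBasis X
  have hImem : I.ncard ∈ {n | ∃ I, M.Indep I ∧ I ⊆ X ∧ I.ncard = n} :=
    ⟨I, hI.indep, hI.subset, rfl⟩
  refine le_antisymm (csSup_le ⟨_, hImem⟩ hbound) ?_
  rw [← hM.span_image_eq_of_isBasis hI, ← hcard I hI.subset hI.indep]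
  exact le_csSup ⟨_, hbound⟩ hImem

theorem mrank_union_le (hM : IsRep M φ) (hfin : M.E.Finite) (hX : X ⊆ M.E) (hY : Y ⊆ M.E) :
    mrank M (X ∪ Y) ≤ mrank M X + mrank M Y := by
  have := FiniteDimensional.span_of_finite (ZMod 2) ((hfin.subset hX).image φ)
  have := FiniteDimensional.span_of_finite (ZMod 2) ((hfin.subset hY).image φ)
  rw [hM.mrank_eq_finrank_span (union_subset hX hY) (hfin.subset (union_subset hX hY)),
    hM.mrank_eq_finrank_span hX (hfin.subset hX), hM.mrank_eq_finrank_span hY (hfin.subset hY),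
    image_union, span_union]
  exact finrank_add_le_finrank_add_finrank _ _

theorem exists_functional_of_isCocircuit (hM : IsRep M φ) (hQ : M.IsCocircuit Q) :
    ∃ g : W →ₗ[ZMod 2] ZMod 2, EqOn (g ∘ φ) (Q.indicator 1) M.E := by
  have hQE := hQ.subset_ground
  obtain ⟨y, hyE, hy⟩ : ∃ y ∈ M.E, φ y ∉ span (ZMod 2) (φ '' (M.E \ Q)) := by
    by_contra! h
    exact hQ.isCircuit.dep.not_indep ((hM.coindep_iff hQE).2 h)
  obtain ⟨g, hgy, hg⟩ := exists_le_ker_of_notMem hy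
  refine ⟨g, fun x hx => ?_⟩
  by_cases hxQ : x ∈ Q
  · rw [indicator_of_mem hxQ]
    -- `M.E \ Q` is a hyperplane, so `φ y = c • φ x + z` with `g z = 0`; hence `g (φ x) ≠ 0`
    have hspan := (hM.coindep_iff (sdiff_subset.trans hQE)).1
      (hQ.isCircuit.sdiff_singleton_indep hxQ) y hyE
    rw [show M.E \ (Q \ {x}) = insert x (M.E \ Q) by ext; simp; grind, image_insert_eq,
      mem_span_insert] at hspan
    obtain ⟨c, z, hz, hyz⟩ := hspan
    rw [hyz, map_add, map_smul, hg hz, add_zero, smul_eq_mul] at hgy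
    exact Fin.eq_one_of_ne_zero _ (right_ne_zero_of_mul hgy)
  · rw [indicator_of_notMem hxQ]
    exact hg (subset_span ⟨x, ⟨hx, hxQ⟩, rfl⟩)

theorem exists_isCocircuit_subset (hM : IsRep M φ) (hDE : D ⊆ M.E) (hD : D.Nonempty)
    (hg : EqOn (g ∘ φ) (D.indicator 1) M.E) : ∃ Q ⊆ D, M.IsCocircuit Q := by
  obtain ⟨d, hd⟩ := hD
  have hker : span (ZMod 2) (φ '' (M.E \ D)) ≤ LinearMap.ker g :=
    span_le.2 <| by rintro _ ⟨x, ⟨hx, hxD⟩, rfl⟩; simpa [hxD] using hg hx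
  have hdep : M✶.Dep D := by
    refine ⟨fun hcoind => ?_, hDE⟩
    have h0 : g (φ d) = 0 := hker ((hM.coindep_iff hDE).1 hcoind d (hDE hd))
    simpa [h0, hd] using hg (hDE hd)
  exact hdep.exists_isCircuit_subset

theorem two_mul_ncard_inter_le (hM : IsRep M φ) (hfin : M.E.Finite)
    (hcoc : ∀ Q, M.IsCocircuit Q → 2 * (Q ∩ T).ncard ≤ Q.ncard) (hDE : D ⊆ M.E)
    (hg : EqOn (g ∘ φ) (D.indicator 1) M.E) : 2 * (D ∩ T).ncard ≤ D.ncard := by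
  induction hm : D.ncard using Nat.strong_induction_on generalizing D g with
  | _ m ih =>
  obtain rfl | hD := D.eq_empty_or_nonempty
  · simp
  obtain ⟨Q, hQD, hQ⟩ := hM.exists_isCocircuit_subset hDE hD hg
  obtain ⟨gQ, hgQ⟩ := hM.exists_functional_of_isCocircuit hQ
  have hDfin := hfin.subset hDE
  have hsplit := ncard_sdiff_add_ncard_of_subset hQD hDfin
  have hsplitT : ((D \ Q) ∩ T).ncard + (Q ∩ T).ncard = (D ∩ T).ncard := by
    rw [← ncard_inter_add_ncard_sdiff_eq_ncard (D ∩ T) Q (hDfin.inter_of_left T), add_comm,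
      inter_right_comm, inter_eq_right.2 hQD, sdiff_inter_right_comm]
  have hrest : 2 * ((D \ Q) ∩ T).ncard ≤ (D \ Q).ncard := by
    refine ih _ ?_ (sdiff_subset.trans hDE) (g := g - gQ) (fun x hx => ?_) rfl
    · have := (ncard_pos (hDfin.subset hQD)).2 hQ.nonempty
      omega
    · have h1 := hg hx
      have h2 := hgQ hx
      by_cases hxQ : x ∈ Q
      · simp_all [hQD hxQ]
      · by_cases hxD : x ∈ D <;> simp_all
  have := hcoc Q hQ
  omega

theorem ncard_le_ncard_of_eqOn {A B : Set α} (hM : IsRep M φ) (hfin : M.E.Finite)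
    (hcoc : ∀ Q, M.IsCocircuit Q → 2 * (Q ∩ T).ncard ≤ Q.ncard) (hT : T ⊆ M.E)
    (hAB : A ∪ B = M.E) {g : W →ₗ[ZMod 2] ZMod 2} (hg : EqOn (g ∘ φ) (T.indicator 1) A) :
    T.ncard ≤ B.ncard := by
  set D := M.E ∩ Function.support (g ∘ φ)
  have hDE : D ⊆ M.E := inter_subset_left
  have hgD : EqOn (g ∘ φ) (D.indicator 1) M.E := fun x hx => by
    by_cases h : g (φ x) = 0
    · simp [D, h]
    · rw [indicator_of_mem (show x ∈ D from ⟨hx, h⟩)]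
      exact Fin.eq_one_of_ne_zero _ h
  have hDT : D ∆ T ⊆ B := by
    intro x hx
    have hxE : x ∈ M.E := (mem_symmDiff.1 hx).elim (fun h => hDE h.1) (fun h => hT h.1)
    refine (hAB ▸ hxE : x ∈ A ∪ B).resolve_left fun hxA => ?_
    have := hg hxA
    by_cases hxT : x ∈ T <;> simp_all [D, mem_symmDiff]
  have := hM.two_mul_ncard_inter_le hfin hcoc hDE hgD
  have := ncard_symmDiff_add_two_mul_ncard_inter (hfin.subset hDE) (hfin.subset hT)
  have := ncard_le_ncard hDT (hfin.subset (hAB ▸ subset_union_right))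
  omega

end IsRep

section EleSplit

variable {W : Type*} [AddCommGroup W] [Module (ZMod 2) W] {M N : Matroid α} {φ : α → W}
  {T X : Set α} {a x : α} {n : ℕ}

theorem splitRep_of_ne (hx : x ≠ a) : splitRep φ T a x = (φ x, T.indicator 1 x) := by
  simp only [splitRep, if_neg hx, indicator, Pi.one_apply]

theorem splitRep_self : splitRep φ T a a = (0, 1) := by
  simp [splitRep]

theorem fst_image_splitRep (ha : a ∉ X) : Prod.fst '' (splitRep φ T a '' X) = φ '' X := by
  rw [image_image]
  exact image_congr fun x hx => by rw [splitRep_of_ne (ne_of_mem_of_not_mem hx ha)]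

theorem splitRep_image_subset_graph_iff (ha : a ∉ X) {g : W →ₗ[ZMod 2] ZMod 2} :
    splitRep φ T a '' X ⊆ g.graph ↔ EqOn (g ∘ φ) (T.indicator 1) X := by
  simp only [image_subset_iff]
  refine forall₂_congr fun x hx => ?_
  rw [mem_preimage, SetLike.mem_coe, LinearMap.mem_graph_iff,
    splitRep_of_ne (ne_of_mem_of_not_mem hx ha), eq_comm]
  rfl

namespace IsEleSplit

theorem mrank_eq_finrank_span (hN : IsEleSplit M φ T a N) (hfin : M.E.Finite) (hX : X ⊆ M.E) :
    mrank N X = finrank (ZMod 2) (span (ZMod 2) (splitRep φ T a '' X)) :=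
  hN.2.2.mrank_eq_finrank_span (hN.2.1 ▸ hX.trans (subset_insert a M.E)) (hfin.subset hX)

theorem mrank_insert (hM : IsRep M φ) (hN : IsEleSplit M φ T a N) (hfin : M.E.Finite)
    (hX : X ⊆ M.E) : mrank N (insert a X) = mrank M X + 1 := by
  have hXfin := hfin.subset hX
  rw [hN.2.2.mrank_eq_finrank_span (hN.2.1 ▸ insert_subset_insert hX) (hXfin.insert a),
    image_insert_eq, splitRep_self, finrank_span_insert_inr_one (hXfin.image _),
    fst_image_splitRep fun ha => hN.1 (hX ha), hM.mrank_eq_finrank_span hX hXfin]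

theorem mrank_eq_of_eqOn (hM : IsRep M φ) (hN : IsEleSplit M φ T a N) (hfin : M.E.Finite)
    (hX : X ⊆ M.E) {g : W →ₗ[ZMod 2] ZMod 2} (hg : EqOn (g ∘ φ) (T.indicator 1) X) :
    mrank N X = mrank M X := by
  have ha : a ∉ X := fun ha => hN.1 (hX ha)
  rw [hN.mrank_eq_finrank_span hfin hX,
    finrank_span_eq_of_subset_graph ((splitRep_image_subset_graph_iff ha).2 hg),
    fst_image_splitRep ha, hM.mrank_eq_finrank_span hX (hfin.subset hX)]

theorem mrank_eq_add_one (hM : IsRep M φ) (hN : IsEleSplit M φ T a N) (hfin : M.E.Finite)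
    (hX : X ⊆ M.E) (hg : ¬∃ g : W →ₗ[ZMod 2] ZMod 2, EqOn (g ∘ φ) (T.indicator 1) X) :
    mrank N X = mrank M X + 1 := by
  have ha : a ∉ X := fun ha => hN.1 (hX ha)
  have hmem : ((0 : W), (1 : ZMod 2)) ∈ span (ZMod 2) (splitRep φ T a '' X) := by
    by_contra hnot
    obtain ⟨g, hS⟩ := exists_subset_graph_of_notMem_span hnot
    exact hg ⟨g, (splitRep_image_subset_graph_iff ha).1 hS⟩
  rw [← hN.mrank_insert hM hfin hX, hN.mrank_eq_finrank_span hfin hX,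
    hN.2.2.mrank_eq_finrank_span (hN.2.1 ▸ insert_subset_insert hX) ((hfin.subset hX).insert a),
    image_insert_eq, splitRep_self, span_insert_eq_span hmem]

theorem isKSeparation_of_eqOn (hM : IsRep M φ) (hN : IsEleSplit M φ T a N) (hfin : M.E.Finite)
    {B : Set α} (hBE : B ⊆ M.E) (hB : 2 * B.ncard < M.E.ncard) {g : W →ₗ[ZMod 2] ZMod 2}
    (hg : EqOn (g ∘ φ) (T.indicator 1) (M.E \ B)) :
    IsKSeparation N (B.ncard + 1) (M.E \ B) (insert a B) := by
  have hBfin := hfin.subset hBE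
  refine ⟨?_, ?_, ?_, ?_, ?_⟩
  · rw [union_insert, sdiff_union_of_subset hBE, hN.2.1]
  · exact disjoint_insert_right.2 ⟨fun h => hN.1 h.1, disjoint_sdiff_left⟩
  · rw [ncard_sdiff hBE hBfin]
    omega
  · rw [ncard_insert_of_notMem (fun h => hN.1 (hBE h)) hBfin]
  · rw [hN.mrank_eq_of_eqOn hM hfin sdiff_subset hg, hN.mrank_insert hM hfin hBE, hN.2.1,
      hN.mrank_insert hM hfin subset_rfl]
    have := mrank_mono M (sdiff_subset : M.E \ B ⊆ M.E) hfin
    have := mrank_le_ncard M hBfin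
    omega

theorem two_mul_ncard_inter_le_of_nConnected (hM : IsRep M φ) (hN : IsEleSplit M φ T a N)
    (hfin : M.E.Finite) (hcard : 2 * n - 2 ≤ M.E.ncard) (hT : T ⊆ M.E) (hTcard : T.ncard = n - 1)
    (hNconn : NConnected N n) {Q : Set α} (hQ : M.IsCocircuit Q) :
    2 * (Q ∩ T).ncard ≤ Q.ncard := by
  by_contra! hlt
  obtain ⟨g, hg⟩ := hM.exists_functional_of_isCocircuit hQ
  have hQE := hQ.subset_ground
  have := ncard_symmDiff_add_two_mul_ncard_inter (hfin.subset hQE) (hfin.subset hT)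
  have hgT : EqOn (g ∘ φ) (T.indicator 1) (M.E \ Q ∆ T) := fun x hx => by
    rw [hg hx.1]
    by_cases hxQ : x ∈ Q <;> by_cases hxT : x ∈ T <;> simp_all [mem_symmDiff]
  exact hNconn _ _ _ (by omega) (by omega) <| hN.isKSeparation_of_eqOn hM hfin
    (symmDiff_subset_union.trans (union_subset hQE hT)) (by omega) hgT

theorem not_isKSeparation_insert (hM : IsRep M φ) (hN : IsEleSplit M φ T a N)
    (hfin : M.E.Finite) (hconn : NConnected M n)
    (hcoc : ∀ Q, M.IsCocircuit Q → 2 * (Q ∩ T).ncard ≤ Q.ncard) (hT : T ⊆ M.E)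
    (hTcard : T.ncard = n - 1) {k : ℕ} {A B : Set α} (hk : 1 ≤ k) (hkn : k < n) (haB : a ∉ B) :
    ¬ IsKSeparation N k A (insert a B) := by
  rintro ⟨hAB, hdisj, hAk, hBk, hr⟩
  have haA : a ∉ A := disjoint_right.1 hdisj (mem_insert a B)
  have hAB' : A ∪ B = M.E := by
    have h := congrArg (· \ {a}) (show insert a (A ∪ B) = insert a M.E by
      rw [← union_insert, hAB, hN.2.1])
    simpa [haA, haB, hN.1] using h
  have hdisj' : Disjoint A B := hdisj.mono_right (subset_insert a B)
  have hAE : A ⊆ M.E := hAB' ▸ subset_union_left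
  have hBE : B ⊆ M.E := hAB' ▸ subset_union_right
  have hsub := hM.mrank_union_le hfin hAE hBE
  rw [hAB'] at hsub
  rw [ncard_insert_of_notMem haB (hfin.subset hBE)] at hBk
  rw [hN.mrank_insert hM hfin hBE, hN.2.1, hN.mrank_insert hM hfin subset_rfl] at hr
  by_cases hg : ∃ g : W →ₗ[ZMod 2] ZMod 2, EqOn (g ∘ φ) (T.indicator 1) A
  · obtain ⟨g, hg⟩ := hg
    rw [hN.mrank_eq_of_eqOn hM hfin hAE hg] at hr
    have := hM.ncard_le_ncard_of_eqOn hfin hcoc hT hAB' hg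
    exact hconn k A B hk hkn ⟨hAB', hdisj', hAk, by omega, by omega⟩
  · rw [hN.mrank_eq_add_one hM hfin hAE hg] at hr
    exact hconn (k - 1) A B (by omega) (by omega) ⟨hAB', hdisj', by omega, by omega, by omega⟩

theorem nConnected (hM : IsRep M φ) (hN : IsEleSplit M φ T a N) (hfin : M.E.Finite)
    (hconn : NConnected M n) (hcoc : ∀ Q, M.IsCocircuit Q → 2 * (Q ∩ T).ncard ≤ Q.ncard)
    (hT : T ⊆ M.E) (hTcard : T.ncard = n - 1) : NConnected N n := by
  intro k A B hk hkn hsep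
  have ha : a ∈ A ∪ B := hsep.1 ▸ hN.2.1 ▸ mem_insert a M.E
  wlog haB : a ∈ B generalizing A B
  · exact this B A hsep.symm (union_comm A B ▸ ha) (ha.resolve_right haB)
  rw [← insert_eq_of_mem haB, ← insert_sdiff_singleton] at hsep
  exact hN.not_isKSeparation_insert hM hfin hconn hcoc hT hTcard hk hkn (fun h => h.2 rfl) hsep

end IsEleSplit

end EleSplit

theorem eleSplit_nConnected_iff_cocircuit_cond_general {α W : Type*}
    [AddCommGroup W] [Module (ZMod 2) W]
    (n : ℕ) (M N : Matroid α) (φ : α → W) (hM : IsRep M φ)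
    (hfin : M.E.Finite) (hcard : 2 * n - 2 ≤ M.E.ncard) (hconn : NConnected M n)
    (T : Set α) (hT : T ⊆ M.E) (hTcard : T.ncard = n - 1)
    (a : α) (hN : IsEleSplit M φ T a N) :
    NConnected N n ↔
      ∀ Q : Set α, MCocircuit M Q → (Q ∩ T).Nonempty → 2 * (Q ∩ T).ncard ≤ Q.ncard := by
  refine ⟨fun hNconn Q hQ _ =>
    hN.two_mul_ncard_inter_le_of_nConnected hM hfin hcard hT hTcard hNconn hQ, fun h => ?_⟩
  refine hN.nConnected hM hfin hconn (fun Q hQ => ?_) hT hTcard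
  obtain hQT | hQT := (Q ∩ T).eq_empty_or_nonempty
  · simp [hQT]
  · exact h Q hQ hQT

/-- M'_T is n-connected if and only if every cocircuit Q of M intersecting T satisfies
|Q| ≥ 2|Q ∩ T|. -/
theorem eleSplit_nConnected_iff_cocircuit_cond {α W : Type*}
    [AddCommGroup W] [Module (ZMod 2) W]
    (n : ℕ) (hn : 2 ≤ n) (M N : Matroid α) (φ : α → W) (hM : IsRep M φ)
    (hfin : M.E.Finite) (hcard : 2 * n - 2 ≤ M.E.ncard) (hconn : NConnected M n)
    (T : Set α) (hT : T ⊆ M.E) (hTcard : T.ncard = n - 1)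
    (a : α) (hN : IsEleSplit M φ T a N) :
    NConnected N n ↔
      ∀ Q : Set α, MCocircuit M Q → (Q ∩ T).Nonempty → 2 * (Q ∩ T).ncard ≤ Q.ncard :=
  eleSplit_nConnected_iff_cocircuit_cond_general n M N φ hM hfin hcard hconn T hT hTcard a hN
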